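/- arXiv:1710.07847 — 5 statements merged into one kernel-verified Lean document; each statement's English description precedes it below -/
import Mathlib

section
/- There exist four pairwise distributions on {−1,+1}² — distributions for (R1,R2), (R2,R3), (R3,R4), (R4,R1) — that are pairwise consistent on overlapping marginals but for which no jointly distributed quadruple (S1,S2,S3,S4) of ±1 random variables has (S_i, S_{i⊕1}) distributed as (R_i, R_{i⊕1}) for all i = 1,...,4. -/
/-- Sign encoding of a Boolean outcome as ±1. -/
def sgn (b : Bool) : ℝ := if b then 1 else -1

/-- `p` is a probability distribution on a finite type. -/
def IsDist {α : Type*} [Fintype α] (p : α → ℝ) : Prop :=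
  (∀ a, 0 ≤ p a) ∧ ∑ a, p a = 1

/-- There exist four pairwise distributions on {−1,+1}² for the cyclically
adjacent pairs (R_i, R_{i⊕1}), consistently connected (overlapping marginals
agree), for which no jointly distributed quadruple matches all four pairs. -/
theorem exists_consistent_pairs_without_coupling :
    ∃ p : Fin 4 → Bool × Bool → ℝ,
      (∀ i, IsDist (p i)) ∧
      (∀ i b, (∑ a : Bool, p i (a, b)) = ∑ a : Bool, p (i + 1) (b, a)) ∧
      ¬ ∃ μ : (Fin 4 → Bool) → ℝ, IsDist μ ∧
        ∀ i x y,
          (∑ ω ∈ Finset.univ.filter (fun ω : Fin 4 → Bool => ω i = x ∧ ω (i + 1) = y), μ ω)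
            = p i (x, y) := by
  refine ⟨fun i xy => if i = 3 then (if xy.1 = xy.2 then 0 else 1/2)
      else (if xy.1 = xy.2 then 1/2 else 0), ?_, ?_, ?_⟩
  · intro i
    constructor
    · rintro ⟨x, y⟩
      dsimp only
      split <;> split <;> norm_num
    · fin_cases i <;> simp [Fintype.sum_prod_type, Fintype.sum_bool] <;> norm_num
  · intro i b
    fin_cases i <;> cases b <;> simp [Fintype.sum_bool]
  · rintro ⟨μ, ⟨hnn, hsum⟩, hmatch⟩
    have key : ∀ (ω : Fin 4 → Bool) (i : Fin 4),
        (if i = 3 then (if ω i = ω (i+1) then (0:ℝ) else 1/2)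
          else (if ω i = ω (i+1) then 1/2 else 0)) = 0 → μ ω = 0 := by
      intro ω i h0
      have h := hmatch i (ω i) (ω (i+1))
      simp only [h0] at h
      exact (Finset.sum_eq_zero_iff_of_nonneg (fun ω' _ => hnn ω')).mp h ω (by simp)
    have hzero : ∀ ω : Fin 4 → Bool, μ ω = 0 := by
      intro ω
      by_cases h01 : ω 0 = ω 1
      · by_cases h12 : ω 1 = ω 2
        · by_cases h23 : ω 2 = ω 3
          · refine key ω 3 ?_
            have h30 : ω 3 = ω (3+1) := by
              show ω 3 = ω 0
              rw [h01, h12, h23]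
            simp [h30]
          · refine key ω 2 ?_
            have : (2:Fin 4) ≠ 3 := by decide
            simp only [this, if_false, ite_eq_right_iff]
            intro h; exact absurd h h23
        · refine key ω 1 ?_
          have : (1:Fin 4) ≠ 3 := by decide
          simp only [this, if_false, ite_eq_right_iff]
          intro h; exact absurd h h12
      · refine key ω 0 ?_
        have : (0:Fin 4) ≠ 3 := by decide
        simp only [this, if_false, ite_eq_right_iff]
        intro h; exact absurd h h01
    rw [Finset.sum_eq_zero (fun ω _ => hzero ω)] at hsum
    norm_num at hsum
end

section
/- If four pairwise distributions for (R1,R2), (R2,R3), (R3,R4), (R4,R1) on {−1,+1}² admit a jointly distributed quadruple (S1,S2,S3,S4) matching each pair in distribution, then max over j of |Σ_{i=1}^4 E[R_i R_{i⊕1}] − 2 E[R_j R_{j⊕1}]| ≤ 2. -/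
/-- Expectation of the product of the two ±1 coordinates under a
distribution on {−1,+1}². -/
def pairE (p : Bool × Bool → ℝ) : ℝ := ∑ a : Bool × Bool, p a * (sgn a.1 * sgn a.2)

lemma sgn_mul_self (b : Bool) : sgn b * sgn b = 1 := by cases b <;> simp [sgn]

lemma chsh_pointwise (ω : Fin 4 → Bool) (j : Fin 4) :
    |(∑ i : Fin 4, sgn (ω i) * sgn (ω (i + 1))) - 2 * (sgn (ω j) * sgn (ω (j + 1)))| ≤ 2 := by
  fin_cases j <;>
  · cases h0 : ω 0 <;> cases h1 : ω 1 <;> cases h2 : ω 2 <;> cases h3 : ω 3 <;>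
      simp_all [Fin.sum_univ_four, sgn, Fin.isValue, show (3 + 1 : Fin 4) = 0 by decide,
        show (1 + 1 : Fin 4) = 2 by decide, show (2 + 1 : Fin 4) = 3 by decide] <;>
      norm_num

/-- If the four cyclically adjacent pairwise distributions admit a reduced
coupling (a jointly distributed quadruple matching each pair in distribution),
then the CHSH/Fine inequality holds. -/
theorem chsh_of_reduced_coupling (p : Fin 4 → Bool × Bool → ℝ)
    (hp : ∀ i, IsDist (p i))
    (hcoupling : ∃ μ : (Fin 4 → Bool) → ℝ, IsDist μ ∧
      ∀ i x y,
        (∑ ω ∈ Finset.univ.filter (fun ω : Fin 4 → Bool => ω i = x ∧ ω (i + 1) = y), μ ω)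
          = p i (x, y)) :
    ∀ j : Fin 4, |(∑ i : Fin 4, pairE (p i)) - 2 * pairE (p j)| ≤ 2 := by
  obtain ⟨μ, ⟨hμ0, hμ1⟩, hμ⟩ := hcoupling
  have hE : ∀ i : Fin 4, pairE (p i) = ∑ ω : Fin 4 → Bool, μ ω * (sgn (ω i) * sgn (ω (i + 1))) := by
    intro i
    rw [pairE]
    rw [← Finset.sum_fiberwise (g := fun ω : Fin 4 → Bool => (ω i, ω (i + 1)))
      (f := fun ω => μ ω * (sgn (ω i) * sgn (ω (i + 1))))]
    refine Finset.sum_congr rfl fun a _ => ?_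
    rw [← hμ i a.1 a.2]
    rw [Finset.sum_mul]
    refine Finset.sum_congr ?_ fun ω hω => ?_
    · ext ω; simp [Prod.ext_iff]
    · simp only [Finset.mem_filter] at hω
      rw [← hω.2]
  intro j
  have key : (∑ i : Fin 4, pairE (p i)) - 2 * pairE (p j)
      = ∑ ω : Fin 4 → Bool, μ ω *
        ((∑ i : Fin 4, sgn (ω i) * sgn (ω (i + 1))) - 2 * (sgn (ω j) * sgn (ω (j + 1)))) := by
    simp only [hE, Finset.mul_sum, mul_sub, Finset.sum_sub_distrib, Finset.mul_sum]
    rw [Finset.sum_comm]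
    congr 1
    exact Finset.sum_congr rfl fun ω _ => by ring
  rw [key]
  calc |∑ ω : Fin 4 → Bool, μ ω * _| ≤ ∑ ω : Fin 4 → Bool, |μ ω *
        ((∑ i : Fin 4, sgn (ω i) * sgn (ω (i + 1))) - 2 * (sgn (ω j) * sgn (ω (j + 1))))| :=
        Finset.abs_sum_le_sum_abs _ _
    _ ≤ ∑ ω : Fin 4 → Bool, μ ω * 2 := by
        refine Finset.sum_le_sum fun ω _ => ?_
        rw [abs_mul, abs_of_nonneg (hμ0 ω)]
        exact mul_le_mul_of_nonneg_left (chsh_pointwise ω j) (hμ0 ω)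
    _ = 2 := by rw [← Finset.sum_mul, hμ1, one_mul]
end

section
/- Consider a cyclic rank-2 system: two stochastically unrelated pairs of ±1 random variables (R_A^{AB}, R_B^{AB}) and (R_A^{BA}, R_B^{BA}). A coupling (S_A^{AB}, S_B^{AB}, S_A^{BA}, S_B^{BA}) exists in which Pr[S_A^{AB} = S_A^{BA}] and Pr[S_B^{AB} = S_B^{BA}] are each maximal possible (given the marginals) if and only if |E[R_A^{AB} R_B^{AB}] − E[R_A^{BA} R_B^{BA}]| ≤ |E[R_A^{AB}] − E[R_A^{BA}]| + |E[R_B^{AB}] − E[R_B^{BA}]|. -/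
/-- Expectation of the first ±1 coordinate. -/
def margE1 (p : Bool × Bool → ℝ) : ℝ := ∑ a : Bool × Bool, p a * sgn a.1

/-- Expectation of the second ±1 coordinate. -/
def margE2 (p : Bool × Bool → ℝ) : ℝ := ∑ a : Bool × Bool, p a * sgn a.2

/-- Probability that the first coordinate equals +1. -/
def margP1 (p : Bool × Bool → ℝ) : ℝ := ∑ y : Bool, p (true, y)

/-- Probability that the second coordinate equals +1. -/
def margP2 (p : Bool × Bool → ℝ) : ℝ := ∑ x : Bool, p (x, true)

def Good (p q : Bool × Bool → ℝ) : Prop :=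
  ∃ μ : (Bool × Bool) × (Bool × Bool) → ℝ, IsDist μ ∧
    (∀ a : Bool × Bool, (∑ b : Bool × Bool, μ (a, b)) = p a) ∧
    (∀ b : Bool × Bool, (∑ a : Bool × Bool, μ (a, b)) = q b) ∧
    (∑ ω ∈ Finset.univ.filter
        (fun ω : (Bool × Bool) × (Bool × Bool) => ω.1.1 = ω.2.1), μ ω)
      = 1 - |margP1 p - margP1 q| ∧
    (∑ ω ∈ Finset.univ.filter
        (fun ω : (Bool × Bool) × (Bool × Bool) => ω.1.2 = ω.2.2), μ ω)
      = 1 - |margP2 p - margP2 q|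

/-- splitting a pair of reals: A = (y-x)₊, B = (x-y)₊, m = min x y -/
lemma split_pair (x y : ℝ) : ∃ A B m : ℝ, A - B = y - x ∧ m + B = x ∧ m + A = y ∧
    0 ≤ A ∧ 0 ≤ B ∧ (A = 0 ∨ B = 0) := by
  rcases le_total x y with h | h
  · exact ⟨y - x, 0, x, by linarith, by linarith, by linarith, by linarith, le_refl 0, Or.inr rfl⟩
  · exact ⟨0, x - y, y, by linarith, by linarith, by linarith, le_refl 0, by linarith, Or.inl rfl⟩

def mu0 (qtt ptt pff A B mA mB A' B' : ℝ) : (Bool × Bool) × (Bool × Bool) → ℝ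
  | ((true,true),(true,true)) => qtt
  | ((true,true),(true,false)) => A
  | ((true,true),(false,true)) => B
  | ((true,true),(false,false)) => ptt - qtt - A - B
  | ((true,false),(true,false)) => mA
  | ((true,false),(false,false)) => A'
  | ((false,true),(false,true)) => mB
  | ((false,true),(false,false)) => B'
  | ((false,false),(false,false)) => pff
  | _ => 0

lemma key (p q : Bool × Bool → ℝ) (hp : IsDist p) (hq : IsDist q)
    (h1 : margP1 q ≤ margP1 p) (h2 : margP2 q ≤ margP2 p)
    (hs : q (true,true) ≤ p (true,true)) (ht : p (false,false) ≤ q (false,false)) :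
    Good p q := by
  obtain ⟨hp0, hp1⟩ := hp
  obtain ⟨hq0, hq1⟩ := hq
  simp [Fintype.sum_prod_type] at hp1 hq1
  simp [margP1, margP2] at h1 h2
  obtain ⟨A, A', mA, fA1, fA2, fA3, fA4, fA5, fA6⟩ :=
    split_pair (p (true,false)) (q (true,false))
  obtain ⟨B, B', mB, fB1, fB2, fB3, fB4, fB5, fB6⟩ :=
    split_pair (p (false,true)) (q (false,true))
  have a1 : |margP1 p - margP1 q| = margP1 p - margP1 q := by
    apply abs_of_nonneg; simp [margP1]; linarith
  have a2 : |margP2 p - margP2 q| = margP2 p - margP2 q := by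
    apply abs_of_nonneg; simp [margP2]; linarith
  refine ⟨mu0 (q (true,true)) (p (true,true)) (p (false,false)) A B mA mB A' B',
    ⟨?_, ?_⟩, ?_, ?_, ?_, ?_⟩
  · intro ω
    rcases ω with ⟨⟨x, y⟩, u, v⟩
    rcases x <;> rcases y <;> rcases u <;> rcases v <;> simp only [mu0] <;>
      rcases fA6 with e | e <;> rcases fB6 with e' | e' <;>
      linarith [hp0 (true,true), hp0 (true,false), hp0 (false,true), hp0 (false,false),
        hq0 (true,true), hq0 (true,false), hq0 (false,true), hq0 (false,false)]
  · simp [Fintype.sum_prod_type, mu0]; linarith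
  · intro a; rcases a with ⟨x, y⟩
    rcases x <;> rcases y <;> simp [Fintype.sum_prod_type, mu0] <;> linarith
  · intro b; rcases b with ⟨u, v⟩
    rcases u <;> rcases v <;> simp [Fintype.sum_prod_type, mu0] <;> linarith
  · rw [a1]; simp [Finset.sum_filter, Fintype.sum_prod_type, mu0, margP1]; linarith
  · rw [a2]; simp [Finset.sum_filter, Fintype.sum_prod_type, mu0, margP2]; linarith

lemma good_swap (p q : Bool × Bool → ℝ) (h : Good q p) : Good p q := by
  obtain ⟨μ, ⟨hpos, hsum⟩, hA, hB, h1, h2⟩ := h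
  refine ⟨fun ω => μ (ω.2, ω.1), ⟨fun ω => hpos _, ?_⟩, ?_, ?_, ?_, ?_⟩
  · simp [Fintype.sum_prod_type] at hsum ⊢; linarith
  · intro a; simpa using hB a
  · intro b; simpa using hA b
  · rw [abs_sub_comm]
    simp [Finset.sum_filter, Fintype.sum_prod_type] at h1 ⊢; linarith
  · rw [abs_sub_comm]
    simp [Finset.sum_filter, Fintype.sum_prod_type] at h2 ⊢; linarith

lemma good_flip2 (p q : Bool × Bool → ℝ) (hp : IsDist p) (hq : IsDist q)
    (h : Good (fun a => p (a.1, !a.2)) (fun a => q (a.1, !a.2))) : Good p q := by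
  obtain ⟨μ, ⟨hpos, hsum⟩, hA, hB, h1, h2⟩ := h
  obtain ⟨hp0, hp1⟩ := hp
  obtain ⟨hq0, hq1⟩ := hq
  simp [Fintype.sum_prod_type] at hp1 hq1
  refine ⟨fun ω => μ ((ω.1.1, !ω.1.2), (ω.2.1, !ω.2.2)), ⟨fun ω => hpos _, ?_⟩, ?_, ?_, ?_, ?_⟩
  · simp [Fintype.sum_prod_type] at hsum ⊢; linarith
  · intro a; rcases a with ⟨x, y⟩
    have := hA (x, !y)
    rcases x <;> rcases y <;> simp [Fintype.sum_prod_type] at this ⊢ <;> linarith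
  · intro b; rcases b with ⟨u, v⟩
    have := hB (u, !v)
    rcases u <;> rcases v <;> simp [Fintype.sum_prod_type] at this ⊢ <;> linarith
  · have e : margP1 (fun a : Bool × Bool => p (a.1, !a.2)) - margP1 (fun a : Bool × Bool => q (a.1, !a.2))
        = margP1 p - margP1 q := by simp [margP1]; ring
    rw [e] at h1
    simp [Finset.sum_filter, Fintype.sum_prod_type] at h1 ⊢; linarith
  · have e : margP2 (fun a : Bool × Bool => p (a.1, !a.2)) - margP2 (fun a : Bool × Bool => q (a.1, !a.2))
        = -(margP2 p - margP2 q) := by simp [margP2]; linarith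
    rw [e, abs_neg] at h2
    simp [Finset.sum_filter, Fintype.sum_prod_type] at h2 ⊢; linarith

lemma isDist_flip2 (p : Bool × Bool → ℝ) (hp : IsDist p) :
    IsDist (fun a : Bool × Bool => p (a.1, !a.2)) := by
  obtain ⟨h0, h1⟩ := hp
  refine ⟨fun a => h0 _, ?_⟩
  simp [Fintype.sum_prod_type] at h1 ⊢; linarith

lemma margP1_flip2 (p : Bool × Bool → ℝ) :
    margP1 (fun a : Bool × Bool => p (a.1, !a.2)) = margP1 p := by simp [margP1]; ring

lemma margP2_flip2 (p : Bool × Bool → ℝ) (hp : IsDist p) :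
    margP2 (fun a : Bool × Bool => p (a.1, !a.2)) = 1 - margP2 p := by
  have h1 := hp.2
  simp [Fintype.sum_prod_type] at h1
  simp [margP2]; linarith

lemma pairE_flip2 (p : Bool × Bool → ℝ) :
    pairE (fun a : Bool × Bool => p (a.1, !a.2)) = -pairE p := by
  simp [pairE, sgn, Fintype.sum_prod_type]; ring

lemma margE1_flip2 (p : Bool × Bool → ℝ) :
    margE1 (fun a : Bool × Bool => p (a.1, !a.2)) = margE1 p := by
  simp [margE1, sgn, Fintype.sum_prod_type]; ring

lemma margE2_flip2 (p : Bool × Bool → ℝ) :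
    margE2 (fun a : Bool × Bool => p (a.1, !a.2)) = -margE2 p := by
  simp [margE2, sgn, Fintype.sum_prod_type]; ring

lemma abs_neg_sub (a b : ℝ) : |(-a) - (-b)| = |a - b| := by
  rw [show (-a) - (-b) = -(a - b) by ring, abs_neg]

lemma case1 (p q : Bool × Bool → ℝ) (hp : IsDist p) (hq : IsDist q)
    (c1 : margP1 q ≤ margP1 p) (c2 : margP2 q ≤ margP2 p)
    (h : |pairE p - pairE q| ≤ |margE1 p - margE1 q| + |margE2 p - margE2 q|) :
    Good p q := by
  have hp1 := hp.2; have hq1 := hq.2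
  simp [Fintype.sum_prod_type] at hp1 hq1
  have c1' := c1; have c2' := c2
  simp [margP1, margP2] at c1' c2'
  have e1 : |margE1 p - margE1 q| = margE1 p - margE1 q := by
    apply abs_of_nonneg; simp [margE1, sgn, Fintype.sum_prod_type]; linarith
  have e2 : |margE2 p - margE2 q| = margE2 p - margE2 q := by
    apply abs_of_nonneg; simp [margE2, sgn, Fintype.sum_prod_type]; linarith
  rw [e1, e2] at h
  obtain ⟨hl, hr⟩ := abs_le.mp h
  simp [pairE, margE1, margE2, sgn, Fintype.sum_prod_type] at hl hr
  exact key p q hp hq c1 c2 (by linarith) (by linarith)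

set_option maxHeartbeats 2000000 in
lemma fwd (p q : Bool × Bool → ℝ) (h : Good p q) :
    |pairE p - pairE q| ≤ |margE1 p - margE1 q| + |margE2 p - margE2 q| := by
  obtain ⟨μ, ⟨hpos, hsum⟩, hA, hB, h1, h2⟩ := h
  simp [Fintype.sum_prod_type] at hsum
  simp [Finset.sum_filter, Fintype.sum_prod_type] at h1 h2
  have eA1 := hA (true,true); have eA2 := hA (true,false)
  have eA3 := hA (false,true); have eA4 := hA (false,false)
  have eB1 := hB (true,true); have eB2 := hB (true,false)
  have eB3 := hB (false,true); have eB4 := hB (false,false)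
  simp [Fintype.sum_prod_type] at eA1 eA2 eA3 eA4 eB1 eB2 eB3 eB4
  have eP : pairE p = p (true,true) - p (true,false) - p (false,true) + p (false,false) := by
    simp [pairE, sgn, Fintype.sum_prod_type]; ring
  have eQ : pairE q = q (true,true) - q (true,false) - q (false,true) + q (false,false) := by
    simp [pairE, sgn, Fintype.sum_prod_type]; ring
  have eM1 : margE1 p = p (true,true) + p (true,false) - p (false,true) - p (false,false) := by
    simp [margE1, sgn, Fintype.sum_prod_type]; ring
  have eM2 : margE1 q = q (true,true) + q (true,false) - q (false,true) - q (false,false) := by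
    simp [margE1, sgn, Fintype.sum_prod_type]; ring
  have eM3 : margE2 p = p (true,true) - p (true,false) + p (false,true) - p (false,false) := by
    simp [margE2, sgn, Fintype.sum_prod_type]; ring
  have eM4 : margE2 q = q (true,true) - q (true,false) + q (false,true) - q (false,false) := by
    simp [margE2, sgn, Fintype.sum_prod_type]; ring
  have eN1 : margP1 p = p (true,true) + p (true,false) := by simp [margP1]
  have eN2 : margP1 q = q (true,true) + q (true,false) := by simp [margP1]
  have eN3 : margP2 p = p (true,true) + p (false,true) := by simp [margP2]
  have eN4 : margP2 q = q (true,true) + q (false,true) := by simp [margP2]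
  rcases abs_cases (pairE p - pairE q) with ⟨x1, s1⟩ | ⟨x1, s1⟩ <;>
    rcases abs_cases (margE1 p - margE1 q) with ⟨x2, s2⟩ | ⟨x2, s2⟩ <;>
    rcases abs_cases (margE2 p - margE2 q) with ⟨x3, s3⟩ | ⟨x3, s3⟩ <;>
    rcases abs_cases (margP1 p - margP1 q) with ⟨x4, s4⟩ | ⟨x4, s4⟩ <;>
    rcases abs_cases (margP2 p - margP2 q) with ⟨x5, s5⟩ | ⟨x5, s5⟩ <;>
    linarith [hpos ((true,true),(true,true)), hpos ((true,true),(true,false)),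
      hpos ((true,true),(false,true)), hpos ((true,true),(false,false)),
      hpos ((true,false),(true,true)), hpos ((true,false),(true,false)),
      hpos ((true,false),(false,true)), hpos ((true,false),(false,false)),
      hpos ((false,true),(true,true)), hpos ((false,true),(true,false)),
      hpos ((false,true),(false,true)), hpos ((false,true),(false,false)),
      hpos ((false,false),(true,true)), hpos ((false,false),(true,false)),
      hpos ((false,false),(false,true)), hpos ((false,false),(false,false))]

/-- Criterion of noncontextuality for a cyclic rank-2 system: a coupling in
which each pair of same-content variables is equal with maximal possible
probability exists iff
`|E[R_A^{AB}R_B^{AB}] − E[R_A^{BA}R_B^{BA}]| ≤ |E[R_A^{AB}] − E[R_A^{BA}]| + |E[R_B^{AB}] − E[R_B^{BA}]|`. -/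
theorem cyclic2_maximal_coupling_iff (pAB pBA : Bool × Bool → ℝ)
    (hAB : IsDist pAB) (hBA : IsDist pBA) :
    (∃ μ : (Bool × Bool) × (Bool × Bool) → ℝ, IsDist μ ∧
      (∀ a : Bool × Bool, (∑ b : Bool × Bool, μ (a, b)) = pAB a) ∧
      (∀ b : Bool × Bool, (∑ a : Bool × Bool, μ (a, b)) = pBA b) ∧
      (∑ ω ∈ Finset.univ.filter
          (fun ω : (Bool × Bool) × (Bool × Bool) => ω.1.1 = ω.2.1), μ ω)
        = 1 - |margP1 pAB - margP1 pBA| ∧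
      (∑ ω ∈ Finset.univ.filter
          (fun ω : (Bool × Bool) × (Bool × Bool) => ω.1.2 = ω.2.2), μ ω)
        = 1 - |margP2 pAB - margP2 pBA|) ↔
    |pairE pAB - pairE pBA|
      ≤ |margE1 pAB - margE1 pBA| + |margE2 pAB - margE2 pBA| := by
  constructor
  · intro hex
    exact fwd pAB pBA hex
  · intro h
    show Good pAB pBA
    rcases le_total (margP1 pBA) (margP1 pAB) with c1 | c1 <;>
      rcases le_total (margP2 pBA) (margP2 pAB) with c2 | c2
    · exact case1 pAB pBA hAB hBA c1 c2 h
    · -- margP1 pBA ≤ margP1 pAB, margP2 pAB ≤ margP2 pBA : flip second coordinate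
      apply good_flip2 _ _ hAB hBA
      apply case1 _ _ (isDist_flip2 _ hAB) (isDist_flip2 _ hBA)
      · rw [margP1_flip2, margP1_flip2]; exact c1
      · rw [margP2_flip2 _ hAB, margP2_flip2 _ hBA]; linarith
      · rw [pairE_flip2, pairE_flip2, margE1_flip2, margE1_flip2,
          margE2_flip2, margE2_flip2, abs_neg_sub, abs_neg_sub]
        exact h
    · -- margP1 pAB ≤ margP1 pBA, margP2 pBA ≤ margP2 pAB : flip2 then swap
      apply good_flip2 _ _ hAB hBA
      apply good_swap
      apply case1 _ _ (isDist_flip2 _ hBA) (isDist_flip2 _ hAB)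
      · rw [margP1_flip2, margP1_flip2]; exact c1
      · rw [margP2_flip2 _ hAB, margP2_flip2 _ hBA]; linarith
      · rw [pairE_flip2, pairE_flip2, margE1_flip2, margE1_flip2,
          margE2_flip2, margE2_flip2, abs_neg_sub, abs_neg_sub,
          abs_sub_comm, abs_sub_comm (margE1 pBA), abs_sub_comm (margE2 pBA)]
        exact h
    · -- swap
      apply good_swap
      apply case1 pBA pAB hBA hAB c1 c2
      rw [abs_sub_comm, abs_sub_comm (margE1 pBA), abs_sub_comm (margE2 pBA)]
      exact h
end

section
/- For any four jointly distributed ±1-valued random variables S1,...,S4, |E[S1S2] + E[S2S3] + E[S3S4] − E[S4S1]| ≤ 2. -/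
open MeasureTheory

lemma chsh_pt (a b c d : ℝ) (ha : a = 1 ∨ a = -1) (hb : b = 1 ∨ b = -1)
    (hc : c = 1 ∨ c = -1) (hd : d = 1 ∨ d = -1) :
    |a * b + b * c + c * d - d * a| ≤ 2 := by
  rcases ha with ha | ha <;> rcases hb with hb | hb <;> rcases hc with hc | hc <;>
    rcases hd with hd | hd <;> subst ha hb hc hd <;> norm_num

/-- For any four jointly distributed ±1-valued random variables,
`|E[S₁S₂] + E[S₂S₃] + E[S₃S₄] − E[S₄S₁]| ≤ 2`. -/
theorem chsh_one_expression {Ω : Type*} [MeasurableSpace Ω]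
    (μ : Measure Ω) [IsProbabilityMeasure μ]
    (S₁ S₂ S₃ S₄ : Ω → ℝ)
    (h₁ : ∀ ω, S₁ ω = 1 ∨ S₁ ω = -1) (h₂ : ∀ ω, S₂ ω = 1 ∨ S₂ ω = -1)
    (h₃ : ∀ ω, S₃ ω = 1 ∨ S₃ ω = -1) (h₄ : ∀ ω, S₄ ω = 1 ∨ S₄ ω = -1)
    (hm₁ : Measurable S₁) (hm₂ : Measurable S₂)
    (hm₃ : Measurable S₃) (hm₄ : Measurable S₄) :
    |(∫ ω, S₁ ω * S₂ ω ∂μ) + (∫ ω, S₂ ω * S₃ ω ∂μ)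
      + (∫ ω, S₃ ω * S₄ ω ∂μ) - ∫ ω, S₄ ω * S₁ ω ∂μ| ≤ 2 := by
  have habs : ∀ (f g : Ω → ℝ), (∀ ω, f ω = 1 ∨ f ω = -1) → (∀ ω, g ω = 1 ∨ g ω = -1) →
      ∀ ω, ‖f ω * g ω‖ ≤ 1 := by
    intro f g hf hg ω
    rcases hf ω with h | h <;> rcases hg ω with h' | h' <;> simp [h, h']
  have int : ∀ (f g : Ω → ℝ), Measurable f → Measurable g →
      (∀ ω, f ω = 1 ∨ f ω = -1) → (∀ ω, g ω = 1 ∨ g ω = -1) →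
      Integrable (fun ω => f ω * g ω) μ := by
    intro f g hf hg hf1 hg1
    exact (integrable_const (1 : ℝ)).mono' ((hf.mul hg).aestronglyMeasurable)
      (Filter.Eventually.of_forall (habs f g hf1 hg1))
  have i12 := int S₁ S₂ hm₁ hm₂ h₁ h₂
  have i23 := int S₂ S₃ hm₂ hm₃ h₂ h₃
  have i34 := int S₃ S₄ hm₃ hm₄ h₃ h₄
  have i41 := int S₄ S₁ hm₄ hm₁ h₄ h₁
  have i123 : Integrable (fun ω => S₁ ω * S₂ ω + S₂ ω * S₃ ω) μ := i12.add i23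
  have i1234 : Integrable (fun ω => S₁ ω * S₂ ω + S₂ ω * S₃ ω + S₃ ω * S₄ ω) μ := i123.add i34
  rw [← integral_add i12 i23, ← integral_add i123 i34, ← integral_sub i1234 i41]
  calc ‖∫ ω, (S₁ ω * S₂ ω + S₂ ω * S₃ ω + S₃ ω * S₄ ω - S₄ ω * S₁ ω) ∂μ‖
      ≤ 2 * (μ Set.univ).toReal := by
        apply norm_integral_le_of_norm_le_const
        exact Filter.Eventually.of_forall fun ω =>
          chsh_pt _ _ _ _ (h₁ ω) (h₂ ω) (h₃ ω) (h₄ ω)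
    _ = 2 := by simp
end

section
/- In the double-slit cyclic rank-4 system with parameters p, q, p', q', r' as described, the left-hand side of the noncontextuality criterion equals (1−2p) + 1 + (1−2q) + (1−2p'−2q') − 2·min of these four terms, and it never exceeds 2 + 2|p − p' − r'| + 2|q − q' − r'| + 0 + 0, so the system is noncontextual for all admissible parameter values. -/
/-- The double-slit cyclic rank-4 system is noncontextual for all admissible
parameter values: with product expectations `E₀ = 1−2p`, `E₁ = 1`,
`E₂ = 1−2q`, `E₃ = 1−2p'−2q'`, every CHSH-type expression
`|Σᵢ Eᵢ − 2Eⱼ|` is bounded by `2 + 2|p − p' − r'| + 2|q − q' − r'|`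
(the two closed-slit connection discrepancies being 0). -/
theorem double_slit_system_noncontextual
    (p q p' q' r' : ℝ)
    (hp0 : 0 ≤ p) (hq0 : 0 ≤ q) (hp'0 : 0 ≤ p') (hq'0 : 0 ≤ q') (hr'0 : 0 ≤ r')
    (hp : p ≤ 1 / 2) (hq : q ≤ 1 / 2) (hp'q' : p' + q' ≤ 1 / 2)
    (htot : r' + p' + q' ≤ 1)
    (E : Fin 4 → ℝ)
    (hE0 : E 0 = 1 - 2 * p) (hE1 : E 1 = 1) (hE2 : E 2 = 1 - 2 * q)
    (hE3 : E 3 = 1 - 2 * p' - 2 * q') :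
    ∀ j : Fin 4,
      |(∑ i : Fin 4, E i) - 2 * E j|
        ≤ 2 + 2 * |p - p' - r'| + 2 * |q - q' - r'| := by
  intro j
  have h1 := abs_nonneg (p - p' - r')
  have h2 := abs_nonneg (q - q' - r')
  have h3 := le_abs_self (p - p' - r')
  have h4 := neg_abs_le (p - p' - r')
  have h5 := le_abs_self (q - q' - r')
  have h6 := neg_abs_le (q - q' - r')
  fin_cases j <;>
    simp [Fin.sum_univ_four, hE0, hE1, hE2, hE3] <;>
    rw [abs_le] <;> constructor <;> nlinarith
end
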